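/- arXiv:2211.14137 — 2 statements merged into one kernel-verified Lean document; each statement's English description precedes it below -/
import Mathlib

section
/- Let n ≥ 1, p > (n−1)/2 and σ ∈ E₊, and let I_p(σ) be the endomorphism of E given by I_p(σ) = (1/(2(2p+3)))((2p+1)P(σ⁻¹) − σ⁻¹⊗σ⁻¹). Then the determinant of I_p(σ) as an endomorphism of the n(n+1)/2-dimensional space E equals ((2p+1)/(2(2p+3)))^{n(n+1)/2} · (1 − n/(2p+1)) · (det σ)^{−(n+1)}. -/
open MeasureTheory Matrix Real

noncomputable section

/-- Square real matrices of size `n`. -/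
abbrev Mat (n : ℕ) : Type := Matrix (Fin n) (Fin n) ℝ

/-- The submodule of symmetric `n × n` real matrices. -/
def symSubmodule (n : ℕ) : Submodule ℝ (Mat n) where
  carrier := {A | A.IsSymm}
  add_mem' := fun {a b} (ha : aᵀ = a) (hb : bᵀ = b) => by
    show (a + b)ᵀ = a + b
    rw [Matrix.transpose_add, ha, hb]
  zero_mem' := Matrix.isSymm_zero
  smul_mem' := fun c a (ha : aᵀ = a) => by
    show (c • a)ᵀ = c • a
    rw [Matrix.transpose_smul, ha]

/-- The space `E` of symmetric `n × n` real matrices. -/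
abbrev SymMat (n : ℕ) : Type := ↥(symSubmodule n)

lemma symMat_isSymm {n : ℕ} (u : SymMat n) : (u : Mat n).IsSymm := u.2

/-- The endomorphism `P(a) : v ↦ a v a` of the space `E` of symmetric matrices. -/
def Pmap {n : ℕ} (a : SymMat n) : Module.End ℝ (SymMat n) where
  toFun v := ⟨(a : Mat n) * (v : Mat n) * (a : Mat n), by
    show ((a : Mat n) * (v : Mat n) * (a : Mat n))ᵀ = (a : Mat n) * (v : Mat n) * (a : Mat n)
    have ha : (a : Mat n)ᵀ = (a : Mat n) := a.2
    have hv : (v : Mat n)ᵀ = (v : Mat n) := v.2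
    rw [Matrix.transpose_mul, Matrix.transpose_mul, ha, hv, ← Matrix.mul_assoc]⟩
  map_add' u v := by
    apply Subtype.ext
    simp [Matrix.mul_add, Matrix.add_mul]
  map_smul' c v := by
    apply Subtype.ext
    simp [Matrix.mul_smul, Matrix.smul_mul]

/-- The endomorphism `a ⊗ a : v ↦ tr (a v) • a` of the space `E` of symmetric matrices. -/
def tensMap {n : ℕ} (a : SymMat n) : Module.End ℝ (SymMat n) where
  toFun v := ((a : Mat n) * (v : Mat n)).trace • a
  map_add' u v := by
    simp [Matrix.mul_add, add_smul]
  map_smul' c v := by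
    simp [Matrix.mul_smul, smul_smul]

/-- The inverse of a symmetric matrix, as a symmetric matrix. -/
def symInv {n : ℕ} (a : SymMat n) : SymMat n :=
  ⟨(a : Mat n)⁻¹, by
    show ((a : Mat n)⁻¹)ᵀ = (a : Mat n)⁻¹
    have ha : (a : Mat n)ᵀ = (a : Mat n) := a.2
    rw [Matrix.transpose_nonsing_inv, ha]⟩

/-! Write `a = σ⁻¹` and `t = 2p + 1`. Diagonalising `a = U D Uᵀ` with `U` orthogonal, `P(a)` is
conjugate to `v ↦ D v D`, which acts on the coordinates `v_{ij}` (`{i, j}` an unordered pair) by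
multiplication with `d_i d_j`; hence `det P(a) = (det a)^(n+1)`. Since `P(a)⁻¹ = P(a⁻¹)` sends
`a ⊗ a` to the rank-one map `v ↦ tr(a v) a⁻¹`, we get `t P(a) - a ⊗ a = t P(a) (1 - t⁻¹ a⁻¹ ⊗ a)`,
and the matrix determinant lemma evaluates the last factor to `1 - tr(a a⁻¹) / t = 1 - n / t`. -/

theorem LinearMap.det_one_add_smulRight {R M : Type*} [CommRing R] [AddCommGroup M] [Module R M]
    [Module.Free R M] [Module.Finite R M] (φ : M →ₗ[R] R) (x : M) :
    LinearMap.det (1 + φ.smulRight x) = 1 + φ x := by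
  let b := Module.Free.chooseBasis R M
  have hrank : LinearMap.toMatrix b b (φ.smulRight x) =
      Matrix.replicateCol Unit (b.repr x) * Matrix.replicateRow Unit (fun j => φ (b j)) := by
    ext i j
    simp [LinearMap.toMatrix_apply, Matrix.mul_apply, mul_comm]
  rw [← LinearMap.det_toMatrix b, map_add, LinearMap.toMatrix_one, hrank,
    Matrix.det_one_add_replicateCol_mul_replicateRow]
  simp only [dotProduct, add_right_inj]
  conv_rhs => rw [← b.sum_repr x]
  simp only [map_sum, map_smul, smul_eq_mul, mul_comm]

section

variable {n : ℕ}

def symMatEquivSym2 : SymMat n ≃ₗ[ℝ] (Sym2 (Fin n) → ℝ) where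
  toFun v := Sym2.lift ⟨fun i j => (v : Mat n) i j, fun i j => (symMat_isSymm v).apply j i⟩
  map_add' _ _ := funext <| Sym2.ind fun _ _ => rfl
  map_smul' _ _ := funext <| Sym2.ind fun _ _ => rfl
  invFun f := ⟨Matrix.of fun i j => f s(i, j), by
    ext i j
    simp [Sym2.eq_swap]⟩
  left_inv _ := rfl
  right_inv f := funext <| Sym2.ind fun _ _ => rfl

@[simp] lemma symMatEquivSym2_mk (v : SymMat n) (i j : Fin n) :
    symMatEquivSym2 v s(i, j) = (v : Mat n) i j := rfl

lemma finrank_symMat : Module.finrank ℝ (SymMat n) = n * (n + 1) / 2 := by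
  rw [symMatEquivSym2.finrank_eq, Module.finrank_fintype_fun_eq_card, Sym2.card,
    Fintype.card_fin, Nat.choose_two_right, Nat.add_sub_cancel, mul_comm]

def conjMap : Mat n →* Module.End ℝ (SymMat n) where
  toFun g :=
    { toFun v := ⟨g * (v : Mat n) * gᵀ, by
        show (g * (v : Mat n) * gᵀ)ᵀ = g * (v : Mat n) * gᵀ
        rw [Matrix.transpose_mul, Matrix.transpose_mul, Matrix.transpose_transpose,
          (symMat_isSymm v).eq, Matrix.mul_assoc]⟩
      map_add' u v := Subtype.ext <| by simp [Matrix.mul_add, Matrix.add_mul]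
      map_smul' c v := Subtype.ext <| by simp }
  map_one' := LinearMap.ext fun v => Subtype.ext <| by simp
  map_mul' g h := LinearMap.ext fun v => Subtype.ext <| by
    simp [Matrix.transpose_mul, Matrix.mul_assoc]

@[simp] lemma conjMap_apply_coe (g : Mat n) (v : SymMat n) :
    (conjMap g v : Mat n) = g * (v : Mat n) * gᵀ := rfl

lemma Pmap_eq_conjMap (a : SymMat n) : Pmap a = conjMap (a : Mat n) := by
  ext v : 2
  simp [Pmap, (symMat_isSymm a).eq]

def sym2Mul {α M : Type*} [CommMonoid M] (d : α → M) : Sym2 α → M :=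
  Sym2.lift ⟨fun i j => d i * d j, fun _ _ => mul_comm _ _⟩

@[simp] lemma sym2Mul_mk {α M : Type*} [CommMonoid M] (d : α → M) (i j : α) :
    sym2Mul d s(i, j) = d i * d j := rfl

lemma prod_sym2Mul {M : Type*} [CommMonoid M] (d : Fin n → M) :
    ∏ s, sym2Mul d s = (∏ i, d i) ^ (n + 1) := by
  rw [← Sym2.sortEquiv.symm.prod_comp]
  simp only [Sym2.sortEquiv_symm_apply, sym2Mul_mk]
  rw [← Finset.prod_subtype (Finset.univ.filter fun p : Fin n × Fin n => p.1 ≤ p.2) (by simp)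
    (fun p : Fin n × Fin n => d p.1 * d p.2)]
  rw [Finset.prod_mul_distrib, Finset.prod_filter, Finset.prod_filter, Fintype.prod_prod_type,
    Fintype.prod_prod_type_right]
  simp only [Finset.prod_ite, Finset.prod_const_one, mul_one, Finset.prod_const]
  rw [← Finset.prod_mul_distrib, ← Finset.prod_pow]
  refine Finset.prod_congr rfl fun i _ => ?_
  rw [Finset.filter_le_eq_Ici, Finset.filter_ge_eq_Iic, Fin.card_Ici, Fin.card_Iic, ← pow_add]
  congr 1
  omega

lemma symMatEquivSym2_conjMap_diagonal (d : Fin n → ℝ) (v : SymMat n) :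
    symMatEquivSym2 (conjMap (Matrix.diagonal d) v) =
      sym2Mul d * symMatEquivSym2 v := by
  ext s
  induction s with | _ i j
  simp [Matrix.diagonal_mul, Matrix.mul_diagonal]
  ring

lemma det_conjMap_diagonal (d : Fin n → ℝ) :
    LinearMap.det (conjMap (Matrix.diagonal d)) = (∏ i, d i) ^ (n + 1) := by
  have hconj : conjMap (Matrix.diagonal d) =
      symMatEquivSym2.symm.conj (Matrix.toLin' (Matrix.diagonal (sym2Mul d))) := by
    ext v : 1
    apply symMatEquivSym2.injective
    ext s
    simp [LinearEquiv.conj_apply, symMatEquivSym2_conjMap_diagonal, Matrix.mulVec_diagonal]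
  rw [hconj, LinearEquiv.conj_apply, LinearMap.comp_assoc, LinearMap.det_conj,
    LinearMap.det_toLin', Matrix.det_diagonal, prod_sym2Mul]

lemma det_Pmap (a : SymMat n) : LinearMap.det (Pmap a) = (a : Mat n).det ^ (n + 1) := by
  have ha : (a : Mat n).IsHermitian := Matrix.isHermitian_iff_isSymm.mpr (symMat_isSymm a)
  set U : Mat n := (ha.eigenvectorUnitary : Mat n)
  set D : Mat n := Matrix.diagonal ha.eigenvalues
  have hstar : star U = Uᵀ := by
    rw [Matrix.star_eq_conjTranspose, Matrix.conjTranspose_eq_transpose_of_trivial]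
  have hspec : (a : Mat n) = U * D * Uᵀ := by
    simpa [hstar, U, D] using ha.spectral_theorem
  have hU : U * Uᵀ = 1 := by
    rw [← hstar]
    exact Matrix.mem_unitaryGroup_iff.mp ha.eigenvectorUnitary.2
  let φ : Mat n →* ℝ := LinearMap.det.comp conjMap
  have hdetD : D.det = (a : Mat n).det := by
    rw [Matrix.det_diagonal, ha.det_eq_prod_eigenvalues]
    simp
  calc LinearMap.det (Pmap a) = φ (U * D * Uᵀ) := by rw [← hspec, Pmap_eq_conjMap]; rfl
    _ = φ D * φ (U * Uᵀ) := by simp only [map_mul]; ring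
    _ = (a : Mat n).det ^ (n + 1) := by
      rw [hU, map_one, mul_one, ← hdetD, Matrix.det_diagonal]
      exact det_conjMap_diagonal _

def traceMul (a : SymMat n) : SymMat n →ₗ[ℝ] ℝ :=
  Matrix.traceLinearMap (Fin n) ℝ ℝ ∘ₗ LinearMap.mulLeft ℝ (a : Mat n) ∘ₗ (symSubmodule n).subtype

lemma tensMap_eq_smulRight (a : SymMat n) : tensMap a = (traceMul a).smulRight a := rfl

lemma smul_Pmap_sub_tensMap_eq_mul {a : SymMat n} (ha : IsUnit (a : Mat n).det) {t : ℝ}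
    (ht : t ≠ 0) :
    t • Pmap a - tensMap a =
      (t • Pmap a) * (1 + (-t⁻¹ • traceMul a).smulRight (symInv a)) := by
  ext v : 2
  simp [Pmap, tensMap_eq_smulRight, traceMul, symInv, mul_add, Matrix.mul_nonsing_inv _ ha,
    smul_smul, mul_inv_cancel_left₀ ht, sub_eq_add_neg]

lemma det_smul_Pmap_sub_tensMap {a : SymMat n} (ha : IsUnit (a : Mat n).det) {t : ℝ}
    (ht : t ≠ 0) :
    LinearMap.det (t • Pmap a - tensMap a) =
      t ^ (n * (n + 1) / 2) * (a : Mat n).det ^ (n + 1) * (1 - n / t) := by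
  rw [smul_Pmap_sub_tensMap_eq_mul ha ht, map_mul, LinearMap.det_smul, finrank_symMat, det_Pmap,
    LinearMap.det_one_add_smulRight]
  have htrace : traceMul a (symInv a) = n := by
    simp [traceMul, symInv, Matrix.mul_nonsing_inv _ ha]
  rw [LinearMap.smul_apply, htrace, smul_eq_mul]
  ring

end

theorem stmt_13_general (n : ℕ) (p : ℝ) (hp : p > ((n : ℝ) - 1) / 2)
    (σ : SymMat n) (hσ : (σ : Mat n).PosDef) :
    LinearMap.det ((2 * (2 * p + 3))⁻¹ •
        ((2 * p + 1) • Pmap (symInv σ) - tensMap (symInv σ)) : Module.End ℝ (SymMat n)) =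
      ((2 * p + 1) / (2 * (2 * p + 3))) ^ (n * (n + 1) / 2) * (1 - (n : ℝ) / (2 * p + 1)) *
        (σ : Mat n).det ^ (-((n : ℝ) + 1)) := by
  have ht : 2 * p + 1 ≠ 0 := by linarith [(n.cast_nonneg : (0 : ℝ) ≤ n)]
  have hdet : (symInv σ : Mat n).det = (σ : Mat n).det⁻¹ := by
    simp [symInv, Matrix.det_nonsing_inv, Ring.inverse_eq_inv]
  have hunit : IsUnit (symInv σ : Mat n).det := by
    rw [hdet]
    exact hσ.det_pos.ne'.isUnit.inv
  rw [LinearMap.det_smul, finrank_symMat, det_smul_Pmap_sub_tensMap hunit ht, hdet,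
    ← Nat.cast_add_one, Real.rpow_neg hσ.det_pos.le, Real.rpow_natCast, div_pow]
  ring

/-- Corollary 3.3: the determinant of the Fisher information
`I_p(σ) = (2(2p+3))⁻¹ ((2p+1) P(σ⁻¹) - σ⁻¹ ⊗ σ⁻¹)`. -/
theorem stmt_13 (n : ℕ) (hn : 1 ≤ n) (p : ℝ) (hp : p > ((n : ℝ) - 1) / 2)
    (σ : SymMat n) (hσ : (σ : Mat n).PosDef) :
    LinearMap.det ((2 * (2 * p + 3))⁻¹ •
        ((2 * p + 1) • Pmap (symInv σ) - tensMap (symInv σ)) : Module.End ℝ (SymMat n)) =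
      ((2 * p + 1) / (2 * (2 * p + 3))) ^ (n * (n + 1) / 2) * (1 - (n : ℝ) / (2 * p + 1)) *
        (σ : Mat n).det ^ (-((n : ℝ) + 1)) :=
  stmt_13_general n p hp σ hσ

end
end

section
/- Let n ≥ 1, p > (n−1)/2 and σ ∈ E₊, and let I_p(σ) be the endomorphism of E given by I_p(σ) = (1/(2(2p+3)))((2p+1)P(σ⁻¹) − σ⁻¹⊗σ⁻¹). Then I_p(σ) is invertible and its inverse is I_p(σ)⁻¹ = (2(2p+3)/(2p+1)) · (P(σ) + (1/(2p+1−n))·σ⊗σ). -/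
/-!
Write `R(a, b)` for the rank-one map `v ↦ tr(b v) a`. When `a b = 1` one has `P(a) P(b) = 1`,
`P(a) (b ⊗ b) = (a ⊗ a) P(b) = R(a, b)` and `(a ⊗ a)(b ⊗ b) = tr(a b) R(a, b) = n R(a, b)`, so
`(r P(a) - a ⊗ a)(P(b) + c b ⊗ b) = r + (c (r - n) - 1) R(a, b)`. With `a = σ⁻¹`, `b = σ`, `r = 2p + 1`
and `c = 1 / (2p + 1 - n)` the rank-one term vanishes; a one-sided inverse of an endomorphism of
a finite-dimensional space is two-sided.
-/

open MeasureTheory Matrix Real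

noncomputable section

variable {n : ℕ}

def rankOne (a b : SymMat n) : Module.End ℝ (SymMat n) where
  toFun v := ((b : Mat n) * (v : Mat n)).trace • a
  map_add' u v := by simp [Matrix.mul_add, add_smul]
  map_smul' c v := by simp [Matrix.mul_smul, smul_smul]

theorem tensMap_eq_rankOne (a : SymMat n) : tensMap a = rankOne a a := rfl

theorem Pmap_mul_rankOne (a b c : SymMat n) : Pmap c * rankOne a b = rankOne (Pmap c a) b := by
  ext v : 2
  simp [Pmap, rankOne]

theorem rankOne_mul_Pmap (a b c : SymMat n) : rankOne a b * Pmap c = rankOne a (Pmap c b) := by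
  ext v : 1
  simp only [rankOne, Pmap, Module.End.mul_apply, LinearMap.coe_mk, AddHom.coe_mk]
  rw [← Matrix.mul_assoc, ← Matrix.mul_assoc, Matrix.trace_mul_comm]
  simp only [Matrix.mul_assoc]

theorem rankOne_mul_rankOne (a b c d : SymMat n) :
    rankOne a b * rankOne c d = ((b : Mat n) * c).trace • rankOne a d := by
  ext v : 1
  simp [rankOne, smul_smul, mul_comm]

theorem Pmap_mul_Pmap_of_mul_eq_one {a b : SymMat n} (h : (a : Mat n) * b = 1) :
    Pmap a * Pmap b = 1 := by
  have h' : (b : Mat n) * a = 1 := mul_eq_one_comm.mp h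
  ext v : 2
  change (a : Mat n) * (b * v * b) * a = v
  rw [← Matrix.mul_assoc, ← Matrix.mul_assoc, h, Matrix.one_mul, Matrix.mul_assoc, h',
    Matrix.mul_one]

theorem Pmap_apply_of_mul_eq_one {a b : SymMat n} (h : (a : Mat n) * b = 1) :
    Pmap a b = a := by
  ext : 1
  simp [Pmap, h]

theorem sub_tensMap_mul_add_tensMap {a b : SymMat n} (hab : (a : Mat n) * b = 1) {r c : ℝ}
    (hc : c * (r - n) = 1) :
    (r • Pmap a - tensMap a) * (Pmap b + c • tensMap b) = r • 1 := by
  have hba : (b : Mat n) * a = 1 := mul_eq_one_comm.mp hab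
  have htr : ((a : Mat n) * b).trace = n := by simp [hab]
  calc (r • Pmap a - tensMap a) * (Pmap b + c • tensMap b)
      = r • 1 + (c * (r - n) - 1) • rankOne a b := by
        -- the ring structure of `Module.End` over a submodule is found only with the type given
        simp only [_root_.sub_mul (α := Module.End ℝ (SymMat n)),
          _root_.mul_add (R := Module.End ℝ (SymMat n)), smul_mul_assoc, mul_smul_comm,
          tensMap_eq_rankOne, Pmap_mul_rankOne, rankOne_mul_Pmap, rankOne_mul_rankOne,
          Pmap_mul_Pmap_of_mul_eq_one hab, Pmap_apply_of_mul_eq_one hab,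
          Pmap_apply_of_mul_eq_one hba, htr]
        module
    _ = r • 1 := by rw [hc, sub_self, zero_smul, add_zero]

theorem stmt_14_general (n : ℕ) (p : ℝ) (hp : p > ((n : ℝ) - 1) / 2)
    (σ : SymMat n) (hσ : (σ : Mat n).PosDef) :
    IsUnit ((2 * (2 * p + 3))⁻¹ •
        ((2 * p + 1) • Pmap (symInv σ) - tensMap (symInv σ)) : Module.End ℝ (SymMat n)) ∧
      ((2 * (2 * p + 3))⁻¹ • ((2 * p + 1) • Pmap (symInv σ) - tensMap (symInv σ))) *
          ((2 * (2 * p + 3) / (2 * p + 1)) •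
            (Pmap σ + (2 * p + 1 - (n : ℝ))⁻¹ • tensMap σ)) = 1 ∧
        ((2 * (2 * p + 3) / (2 * p + 1)) •
            (Pmap σ + (2 * p + 1 - (n : ℝ))⁻¹ • tensMap σ)) *
          ((2 * (2 * p + 3))⁻¹ • ((2 * p + 1) • Pmap (symInv σ) - tensMap (symInv σ))) = 1 := by
  have hgap : 0 < 2 * p + 1 - n := by linarith
  have h2p1 : 0 < 2 * p + 1 := by linarith [n.cast_nonneg (α := ℝ)]
  have h2p3 : 0 < 2 * p + 3 := by linarith
  have hinv : ((symInv σ : SymMat n) : Mat n) * σ = 1 :=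
    Matrix.nonsing_inv_mul _ (isUnit_iff_ne_zero.mpr hσ.det_pos.ne')
  have hleft := sub_tensMap_mul_add_tensMap hinv (inv_mul_cancel₀ hgap.ne')
  have hmul : ((2 * (2 * p + 3))⁻¹ • ((2 * p + 1) • Pmap (symInv σ) - tensMap (symInv σ))) *
      ((2 * (2 * p + 3) / (2 * p + 1)) • (Pmap σ + (2 * p + 1 - (n : ℝ))⁻¹ • tensMap σ)) = 1 := by
    have hscalar : (2 * (2 * p + 3))⁻¹ * (2 * (2 * p + 3) / (2 * p + 1)) * (2 * p + 1) = 1 := by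
      field_simp
    rw [smul_mul_smul_comm, hleft, smul_smul, hscalar, one_smul]
  exact ⟨IsUnit.of_mul_eq_one _ hmul, hmul, mul_eq_one_comm.mp hmul⟩

/-- Proposition 4.1: `I_p(σ)` is invertible with inverse
`I_p(σ)⁻¹ = (2(2p+3)/(2p+1)) (P(σ) + (2p+1-n)⁻¹ σ ⊗ σ)`. -/
theorem stmt_14 (n : ℕ) (hn : 1 ≤ n) (p : ℝ) (hp : p > ((n : ℝ) - 1) / 2)
    (σ : SymMat n) (hσ : (σ : Mat n).PosDef) :
    IsUnit ((2 * (2 * p + 3))⁻¹ •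
        ((2 * p + 1) • Pmap (symInv σ) - tensMap (symInv σ)) : Module.End ℝ (SymMat n)) ∧
      ((2 * (2 * p + 3))⁻¹ • ((2 * p + 1) • Pmap (symInv σ) - tensMap (symInv σ))) *
          ((2 * (2 * p + 3) / (2 * p + 1)) •
            (Pmap σ + (2 * p + 1 - (n : ℝ))⁻¹ • tensMap σ)) = 1 ∧
        ((2 * (2 * p + 3) / (2 * p + 1)) •
            (Pmap σ + (2 * p + 1 - (n : ℝ))⁻¹ • tensMap σ)) *
          ((2 * (2 * p + 3))⁻¹ • ((2 * p + 1) • Pmap (symInv σ) - tensMap (symInv σ))) = 1 :=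
  stmt_14_general n p hp σ hσ

end
end
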